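/- Suppose F_1 ∈ R[x_2] and F_2 ∈ R[x_1] are irreducible polynomials in R[x_1,x_2], each with nonzero constant term (equivalently, not divisible by any variable), and set x'_1 = F_1/x_1 and x'_2 = F_2/x_2 in 𝔽 (this encodes the hypothesis F̂_j = F_j for j ∈ {1,2}). Then R[x_1, x_2^{±1}] ∩ R[x_1^{±1}, x_2, x'_2] = R[x_1, x_2, x'_2] as R-subalgebras of 𝔽. -/

import Mathlib

open MvPolynomial

/-- The ambient field `𝔽 = Frac(R[x_1, x_2])`. -/
noncomputable abbrev AmbientField (R : Type*) [CommRing R] [IsDomain R] :=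
  FractionRing (MvPolynomial (Fin 2) R)

/-- The cluster variable `x_i` viewed inside the ambient field. -/
noncomputable def xv (R : Type*) [CommRing R] [IsDomain R] (i : Fin 2) : AmbientField R :=
  algebraMap (MvPolynomial (Fin 2) R) (AmbientField R) (MvPolynomial.X i)

/-- The canonical embedding of polynomials into the ambient field. -/
noncomputable def toAmbient (R : Type*) [CommRing R] [IsDomain R]
    (F : MvPolynomial (Fin 2) R) : AmbientField R :=
  algebraMap (MvPolynomial (Fin 2) R) (AmbientField R) F

/-! Write `A = R[x₁, x₂]`, `t = x₂`, `f = F₂` and `w = x₂' = f / t`. If `y` lies in both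
subalgebras, then `t ^ M * y ∈ A` and `x₁ ^ k * y ∈ A[w]`, and clearing denominators in the latter
gives `t ^ N * x₁ ^ k * y ∈ (t, f) ^ N`. Hence `x₁ ^ k * t ^ N * (t ^ M * y) ∈ (t, f) ^ (N + M)`.
Viewing `A` as `S[t]` with `S = R[x₁] ∋ f`, the ideal `(t, f) ^ n` consists of the polynomials
whose `j`-th coefficient is divisible by `f ^ (n - j)`; as `x₁` is prime in `S` and does not
divide `f`, it is a nonzerodivisor modulo every `(t, f) ^ n`. So
`t ^ N * (t ^ M * y) ∈ (t, f) ^ (N + M) ⊆ t ^ (N + M) * A[w]`, that is, `y ∈ A[w]`. -/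

theorem dvd_of_dvd_prime_mul {α : Type*} [CommMonoidWithZero α] [IsCancelMulZero α] {p b c : α}
    (hp : Prime p) (hpb : ¬ p ∣ b) (h : b ∣ p * c) : b ∣ c := by
  obtain ⟨d, hd⟩ := h
  obtain ⟨e, rfl⟩ := (hp.dvd_or_dvd ⟨c, hd.symm⟩).resolve_left hpb
  exact ⟨e, mul_left_cancel₀ hp.ne_zero (hd.trans (mul_left_comm _ _ _))⟩

namespace Polynomial

variable {S : Type*} [CommRing S]

def coeffPowDvdIdeal (g : S) (N : ℕ) : Ideal S[X] where
  carrier := {q | ∀ j < N, g ^ (N - j) ∣ q.coeff j}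
  add_mem' ha hb j hj := by rw [coeff_add]; exact dvd_add (ha j hj) (hb j hj)
  zero_mem' j _ := by simp
  smul_mem' c q hq j hj := by
    rw [smul_eq_mul, coeff_mul]
    refine Finset.dvd_sum fun ab hab => Dvd.dvd.mul_left ?_ _
    rw [Finset.HasAntidiagonal.mem_antidiagonal] at hab
    exact (pow_dvd_pow g (by omega)).trans (hq ab.2 (by omega))

theorem X_mul_mem_coeffPowDvdIdeal {g : S} {N : ℕ} {q : S[X]} (hq : q ∈ coeffPowDvdIdeal g N) :
    X * q ∈ coeffPowDvdIdeal g (N + 1) := by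
  rintro (_ | j) hj
  · simp
  · rw [coeff_X_mul, Nat.add_sub_add_right]
    exact hq j (by omega)

theorem C_mul_mem_coeffPowDvdIdeal {g : S} {N : ℕ} {q : S[X]} (hq : q ∈ coeffPowDvdIdeal g N) :
    C g * q ∈ coeffPowDvdIdeal g (N + 1) := by
  intro j hj
  rw [coeff_C_mul, Nat.sub_add_comm (by omega), pow_succ']
  rcases Nat.lt_or_ge j N with hjN | hjN
  · exact mul_dvd_mul_left g (hq j hjN)
  · rw [Nat.sub_eq_zero_of_le hjN, pow_zero, mul_one]
    exact dvd_mul_right g _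

theorem span_X_C_pow_le_coeffPowDvdIdeal (g : S) (N : ℕ) :
    Ideal.span {X, C g} ^ N ≤ coeffPowDvdIdeal g N := by
  induction N with
  | zero => intro q _ j hj; omega
  | succ N ih =>
    rw [pow_succ', Ideal.mul_le]
    intro r hr s hs
    obtain ⟨a, b, rfl⟩ := Ideal.mem_span_pair.mp hr
    rw [add_mul, mul_assoc, mul_assoc]
    exact add_mem (Ideal.mul_mem_left _ a (X_mul_mem_coeffPowDvdIdeal (ih hs)))
      (Ideal.mul_mem_left _ b (C_mul_mem_coeffPowDvdIdeal (ih hs)))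

theorem coeffPowDvdIdeal_le_span_X_C_pow (g : S) (N : ℕ) :
    coeffPowDvdIdeal g N ≤ Ideal.span {X, C g} ^ N := by
  intro q hq
  have hX : (X : S[X]) ∈ Ideal.span {X, C g} := Ideal.subset_span (by simp)
  have hC : C g ∈ Ideal.span {X, C g} := Ideal.subset_span (by simp)
  rw [q.as_sum_support_C_mul_X_pow]
  refine Ideal.sum_mem _ fun j _ => ?_
  rcases Nat.lt_or_ge j N with hjN | hjN
  · obtain ⟨h, hh⟩ := hq j hjN
    have hmem := Ideal.mul_mem_mul (Ideal.pow_mem_pow hC (N - j)) (Ideal.pow_mem_pow hX j)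
    rw [← pow_add, Nat.sub_add_cancel hjN.le] at hmem
    rw [hh, C_mul, map_pow, mul_comm (C g ^ _), mul_assoc]
    exact Ideal.mul_mem_left _ _ hmem
  · exact Ideal.mul_mem_left _ _ (Ideal.pow_le_pow_right hjN (Ideal.pow_mem_pow hX j))

theorem span_X_C_pow_eq (g : S) (N : ℕ) :
    Ideal.span {X, C g} ^ N = coeffPowDvdIdeal g N :=
  le_antisymm (span_X_C_pow_le_coeffPowDvdIdeal g N) (coeffPowDvdIdeal_le_span_X_C_pow g N)

theorem isSMulRegular_C_quotient_span_X_C_pow [IsDomain S] {a g : S} (ha : Prime a)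
    (hag : ¬ a ∣ g) (N : ℕ) : IsSMulRegular (S[X] ⧸ Ideal.span {X, C g} ^ N) (C a) := by
  rw [isSMulRegular_quotient_iff_mem_of_smul_mem, span_X_C_pow_eq]
  intro q hq j hj
  refine dvd_of_dvd_prime_mul ha (fun h => hag (ha.dvd_of_dvd_pow h)) ?_
  simpa [coeff_C_mul] using hq j hj

end Polynomial

namespace MvPolynomial

variable (R : Type*) [CommRing R]

noncomputable def equivPolynomialInX1 :
    MvPolynomial (Fin 2) R ≃ₐ[R] Polynomial (MvPolynomial (Fin 1) R) :=
  (renameEquiv R (Equiv.swap 0 1)).trans (finSuccEquiv R 1)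

theorem equivPolynomialInX1_X_one : equivPolynomialInX1 R (X 1) = Polynomial.X := by
  simp [equivPolynomialInX1, finSuccEquiv_X_zero]

theorem equivPolynomialInX1_X_zero : equivPolynomialInX1 R (X 0) = Polynomial.C (X 0) := by
  rw [equivPolynomialInX1, AlgEquiv.trans_apply, renameEquiv_apply, rename_X,
    Equiv.swap_apply_left, show (1 : Fin 2) = Fin.succ 0 from rfl, finSuccEquiv_X_succ]

variable {R}

theorem equivPolynomialInX1_eq_C {F : MvPolynomial (Fin 2) R} (hF : ∀ m ∈ F.support, m 1 = 0) :
    equivPolynomialInX1 R F = Polynomial.C ((equivPolynomialInX1 R F).coeff 0) := by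
  refine Polynomial.eq_C_of_natDegree_eq_zero ?_
  have hdeg := degreeOf_rename_of_injective (Equiv.swap (0 : Fin 2) 1).injective (p := F) 1
  rw [Equiv.swap_apply_right] at hdeg
  rw [equivPolynomialInX1, AlgEquiv.trans_apply, natDegree_finSuccEquiv, renameEquiv_apply, hdeg]
  exact Nat.le_zero.mp (degreeOf_le_iff.mpr fun m hm => (hF m hm).le)

theorem isSMulRegular_X_zero_quotient_span_pow [IsDomain R] {F : MvPolynomial (Fin 2) R}
    (hF : ∀ m ∈ F.support, m 1 = 0) (hF0 : coeff 0 F ≠ 0) (N : ℕ) :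
    IsSMulRegular (MvPolynomial (Fin 2) R ⧸ Ideal.span {X 1, F} ^ N)
      (X 0 : MvPolynomial (Fin 2) R) := by
  let e := (equivPolynomialInX1 R).toRingEquiv
  set g := (equivPolynomialInX1 R F).coeff 0
  have heF : e F = Polynomial.C g := equivPolynomialInX1_eq_C hF
  have he0 : e (X 0) = Polynomial.C (X 0) := equivPolynomialInX1_X_zero R
  have he1 : e (X 1) = Polynomial.X := equivPolynomialInX1_X_one R
  have hX0g : ¬ (X 0 : MvPolynomial (Fin 1) R) ∣ g := by
    intro h
    have : e (X 0) ∣ e F := by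
      rw [heF, he0]; exact map_dvd Polynomial.C h
    obtain ⟨c, hc⟩ := (map_dvd_iff e).mp this
    exact hF0 (by rw [hc, ← constantCoeff_eq, map_mul, constantCoeff_X, zero_mul])
  rw [isSMulRegular_quotient_iff_mem_of_smul_mem]
  intro p hp
  rw [← Ideal.apply_mem_of_equiv_iff (f := e), Ideal.map_pow, Ideal.map_span,
    Set.image_pair, heF, he1] at hp ⊢
  rw [smul_eq_mul, map_mul, he0] at hp
  exact mem_of_isSMulRegular_quotient_of_smul_mem
    (Polynomial.isSMulRegular_C_quotient_span_X_C_pow (X_prime (i := 0)) hX0g N) hp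

end MvPolynomial

section

variable {A K : Type*} [CommRing A] [Field K] [Algebra A K]

theorem exists_pow_mul_mem_adjoin_of_mem_adjoin_insert_inv (a : A) (s : Set K) {y : K}
    (hy : y ∈ Algebra.adjoin A (insert (algebraMap A K a)⁻¹ s)) :
    ∃ k : ℕ, algebraMap A K a ^ k * y ∈ Algebra.adjoin A s := by
  set b := algebraMap A K a
  have hb : b ∈ Algebra.adjoin A s := Subalgebra.algebraMap_mem _ a
  induction hy using Algebra.adjoin_induction with
  | mem x hx =>
    rcases hx with rfl | hx
    -- `b * b * b⁻¹ = b` holds even when `b = 0`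
    · exact ⟨2, by rw [sq, mul_self_mul_inv]; exact hb⟩
    · exact ⟨0, by rw [pow_zero, one_mul]; exact Algebra.subset_adjoin hx⟩
  | algebraMap r => exact ⟨0, by rw [pow_zero, one_mul]; exact Subalgebra.algebraMap_mem _ r⟩
  | add x z _ _ hx hz =>
    obtain ⟨k, hk⟩ := hx
    obtain ⟨l, hl⟩ := hz
    refine ⟨k + l, ?_⟩
    rw [show b ^ (k + l) * (x + z) = b ^ l * (b ^ k * x) + b ^ k * (b ^ l * z) by ring]
    exact add_mem (mul_mem (pow_mem hb l) hk) (mul_mem (pow_mem hb k) hl)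
  | mul x z _ _ hx hz =>
    obtain ⟨k, hk⟩ := hx
    obtain ⟨l, hl⟩ := hz
    refine ⟨k + l, ?_⟩
    rw [show b ^ (k + l) * (x * z) = (b ^ k * x) * (b ^ l * z) by ring]
    exact mul_mem hk hl

variable {t f : A} {w : K}

theorem exists_mem_span_pow_of_mem_adjoin (hw : algebraMap A K t * w = algebraMap A K f) {y : K}
    (hy : y ∈ Algebra.adjoin A {w}) :
    ∃ N : ℕ, ∃ q ∈ Ideal.span {t, f} ^ N, algebraMap A K t ^ N * y = algebraMap A K q := by
  have htJ : t ∈ Ideal.span {t, f} := Ideal.subset_span (Set.mem_insert _ _)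
  induction hy using Algebra.adjoin_induction with
  | mem x hx =>
    rw [Set.mem_singleton_iff.mp hx]
    exact ⟨1, f, by rw [pow_one]; exact Ideal.subset_span (by simp), by rw [pow_one, hw]⟩
  | algebraMap r => exact ⟨0, r, by simp, by rw [pow_zero, one_mul]⟩
  | add x z _ _ hx hz =>
    obtain ⟨k, p, hp, hpx⟩ := hx
    obtain ⟨l, q, hq, hqz⟩ := hz
    refine ⟨k + l, t ^ l * p + t ^ k * q, add_mem ?_ ?_, ?_⟩
    · rw [add_comm, pow_add]; exact Ideal.mul_mem_mul (Ideal.pow_mem_pow htJ l) hp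
    · rw [pow_add]; exact Ideal.mul_mem_mul (Ideal.pow_mem_pow htJ k) hq
    · simp only [map_add, map_mul, map_pow, ← hpx, ← hqz]; ring
  | mul x z _ _ hx hz =>
    obtain ⟨k, p, hp, hpx⟩ := hx
    obtain ⟨l, q, hq, hqz⟩ := hz
    refine ⟨k + l, p * q, by rw [pow_add]; exact Ideal.mul_mem_mul hp hq, ?_⟩
    simp only [map_mul, ← hpx, ← hqz]; ring

theorem mem_adjoin_of_mem_span_pow (hw : algebraMap A K t * w = algebraMap A K f)
    (ht : algebraMap A K t ≠ 0) {N : ℕ} {q : A} (hq : q ∈ Ideal.span {t, f} ^ N) {y : K}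
    (hy : algebraMap A K t ^ N * y = algebraMap A K q) : y ∈ Algebra.adjoin A {w} := by
  set B := Algebra.adjoin A {w}
  have hJ : Ideal.map (algebraMap A B) (Ideal.span {t, f}) ≤ Ideal.span {algebraMap A B t} := by
    rw [Ideal.map_span, Set.image_pair, Ideal.span_le, Set.pair_subset_iff]
    refine ⟨Ideal.subset_span rfl, Ideal.mem_span_singleton'.mpr
      ⟨⟨w, Algebra.subset_adjoin rfl⟩, Subtype.ext ?_⟩⟩
    simpa [mul_comm] using hw
  have hqB : algebraMap A B q ∈ Ideal.span {algebraMap A B t ^ N} := by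
    rw [← Ideal.span_singleton_pow]
    exact Ideal.pow_right_mono hJ N (by rw [← Ideal.map_pow]; exact Ideal.mem_map_of_mem _ hq)
  obtain ⟨b, hb⟩ := Ideal.mem_span_singleton'.mp hqB
  have hyb : y = b := mul_left_cancel₀ (pow_ne_zero N ht) <| by
    rw [hy, mul_comm]; simpa using (congrArg Subtype.val hb).symm
  exact hyb ▸ b.2

theorem adjoin_inv_inf_adjoin_inv_insert {u : A} (hinj : Function.Injective (algebraMap A K))
    (ht : t ≠ 0) (hu : ∀ N, IsSMulRegular (A ⧸ Ideal.span {t, f} ^ N) u)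
    (hw : algebraMap A K t * w = algebraMap A K f) :
    Algebra.adjoin A {(algebraMap A K t)⁻¹} ⊓ Algebra.adjoin A {(algebraMap A K u)⁻¹, w} =
      Algebra.adjoin A {w} := by
  have ht' : algebraMap A K t ≠ 0 := (map_ne_zero_iff _ hinj).mpr ht
  apply le_antisymm
  · rintro y ⟨hyt, hyu⟩
    rw [Set.singleton_def] at hyt
    obtain ⟨M, hM⟩ := exists_pow_mul_mem_adjoin_of_mem_adjoin_insert_inv t ∅ hyt
    obtain ⟨p, hp⟩ := Algebra.mem_bot.mp (Algebra.adjoin_empty A K ▸ hM)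
    obtain ⟨k, hk⟩ := exists_pow_mul_mem_adjoin_of_mem_adjoin_insert_inv u {w} hyu
    obtain ⟨N, q, hq, hqy⟩ := exists_mem_span_pow_of_mem_adjoin hw hk
    have key : u ^ k • (t ^ N * p) = t ^ M * q := hinj <| by
      simp only [smul_eq_mul, map_mul, map_pow, hp, ← hqy]; ring
    have hmem : t ^ N * p ∈ Ideal.span {t, f} ^ (N + M) := by
      refine mem_of_isSMulRegular_quotient_of_smul_mem ((hu _).pow k) ?_
      rw [key, pow_add, mul_comm]
      exact Ideal.mul_mem_mul (Ideal.pow_mem_pow (Ideal.subset_span (by simp)) M) hq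
    refine mem_adjoin_of_mem_span_pow hw ht' hmem ?_
    rw [map_mul, map_pow, hp, pow_add]; ring
  · refine le_inf ?_ (Algebra.adjoin_mono (by simp))
    have hwf : w = algebraMap A K f * (algebraMap A K t)⁻¹ := by
      rw [← hw, mul_comm, inv_mul_cancel_left₀ ht']
    rw [Algebra.adjoin_le_iff, Set.singleton_subset_iff, hwf]
    exact mul_mem (Subalgebra.algebraMap_mem _ f) (Algebra.subset_adjoin rfl)

end

theorem adjoin_insert_xv_insert_xv {R : Type*} [CommRing R] [IsDomain R]
    (T : Set (AmbientField R)) :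
    Algebra.adjoin R (insert (xv R 0) (insert (xv R 1) T)) =
      (Algebra.adjoin (MvPolynomial (Fin 2) R) T).restrictScalars R := by
  have hX : Algebra.adjoin R {(X 0 : MvPolynomial (Fin 2) R), X 1} = ⊤ := by
    rw [← adjoin_range_X]
    congr
    ext; simp [Fin.exists_fin_two, eq_comm]
  rw [Algebra.adjoin_eq_adjoin_union R _ T hX, Set.image_pair, Set.insert_union,
    Set.singleton_union]
  rfl

theorem statement3_general {R : Type*} [CommRing R] [IsDomain R]
    (F₂ : MvPolynomial (Fin 2) R)
    -- `F₂ ∈ R[x₁]`, i.e. `F₂` does not involve `x₂`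
    (hF₂x : ∀ m ∈ F₂.support, m 1 = 0)
    -- nonzero constant terms (equivalently, not divisible by any variable)
    (hF₂c : MvPolynomial.coeff 0 F₂ ≠ 0)
    (x₂' : AmbientField R)
    (hx₂' : x₂' = toAmbient R F₂ / xv R 1) :
    (Algebra.adjoin R ({xv R 0, xv R 1, (xv R 1)⁻¹} : Set (AmbientField R))) ⊓
      (Algebra.adjoin R ({xv R 0, (xv R 0)⁻¹, xv R 1, x₂'} : Set (AmbientField R))) =
    Algebra.adjoin R ({xv R 0, xv R 1, x₂'} : Set (AmbientField R)) := by
  have hinj := IsFractionRing.injective (MvPolynomial (Fin 2) R) (AmbientField R)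
  have hx₂ : xv R 1 ≠ 0 := (map_ne_zero_iff _ hinj).mpr (X_ne_zero 1)
  have hw : xv R 1 * x₂' = toAmbient R F₂ := by rw [hx₂', mul_div_cancel₀ _ hx₂]
  rw [Set.insert_comm (xv R 0)⁻¹, adjoin_insert_xv_insert_xv, adjoin_insert_xv_insert_xv,
    adjoin_insert_xv_insert_xv]
  have key := adjoin_inv_inf_adjoin_inv_insert hinj (X_ne_zero 1)
    (isSMulRegular_X_zero_quotient_span_pow hF₂x hF₂c) hw
  ext y
  rw [Algebra.mem_inf, Subalgebra.mem_restrictScalars, Subalgebra.mem_restrictScalars,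
    Subalgebra.mem_restrictScalars, ← Algebra.mem_inf]
  exact SetLike.ext_iff.mp key y

/-- With `F₁ ∈ R[x₂]`, `F₂ ∈ R[x₁]` irreducible with nonzero constant term,
`x₁' = F₁/x₁`, `x₂' = F₂/x₂`, one has
`R[x₁, x₂^{±1}] ∩ R[x₁^{±1}, x₂, x₂'] = R[x₁, x₂, x₂']`. -/
theorem statement3 {R : Type*} [CommRing R] [IsDomain R] [UniqueFactorizationMonoid R]
    (F₁ F₂ : MvPolynomial (Fin 2) R)
    -- `F₁ ∈ R[x₂]`, i.e. `F₁` does not involve `x₁`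
    (hF₁x : ∀ m ∈ F₁.support, m 0 = 0)
    -- `F₂ ∈ R[x₁]`, i.e. `F₂` does not involve `x₂`
    (hF₂x : ∀ m ∈ F₂.support, m 1 = 0)
    (hF₁irr : Irreducible F₁) (hF₂irr : Irreducible F₂)
    -- nonzero constant terms (equivalently, not divisible by any variable)
    (hF₁c : MvPolynomial.coeff 0 F₁ ≠ 0) (hF₂c : MvPolynomial.coeff 0 F₂ ≠ 0)
    (x₁' x₂' : AmbientField R)
    (hx₁' : x₁' = toAmbient R F₁ / xv R 0)
    (hx₂' : x₂' = toAmbient R F₂ / xv R 1) :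
    (Algebra.adjoin R ({xv R 0, xv R 1, (xv R 1)⁻¹} : Set (AmbientField R))) ⊓
      (Algebra.adjoin R ({xv R 0, (xv R 0)⁻¹, xv R 1, x₂'} : Set (AmbientField R))) =
    Algebra.adjoin R ({xv R 0, xv R 1, x₂'} : Set (AmbientField R)) :=
  statement3_general F₂ hF₂x hF₂c x₂' hx₂'
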